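/- Assume n = 3 and all agents have additive cost functions. Every PMMS allocation is (4/3)-MMS. Moreover this bound is tight: there exists a 3-agent instance with additive cost functions, a PMMS allocation A, and an agent i with c_i(A_i) = (4/3)·MMS_i(3,E). -/

import Mathlib

open Finset

/-- `T` is a `k`-partition of the bundle `S`: pairwise disjoint bundles whose union is `S`. -/
def IsPartitionOf {E : Type*} [DecidableEq E] {k : ℕ} (T : Fin k → Finset E) (S : Finset E) :
    Prop :=
  (∀ i j : Fin k, i ≠ j → Disjoint (T i) (T j)) ∧ Finset.univ.biUnion T = S

/-- The maximin share of cost function `c` on `S` among `k` agents: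
the minimum over `k`-partitions of `S` of the maximum cost of a bundle. -/
noncomputable def MMS {E : Type*} [DecidableEq E] (c : Finset E → ℝ) (k : ℕ) (S : Finset E) :
    ℝ :=
  sInf { m : ℝ | ∃ T : Fin k → Finset E, IsPartitionOf T S ∧ m = ⨆ j : Fin k, c (T j) }

/-- `c` is a nonnegative additive cost function. -/
def AdditiveCost {E : Type*} [DecidableEq E] (c : Finset E → ℝ) : Prop :=
  (∀ S : Finset E, 0 ≤ c S) ∧ ∀ S : Finset E, c S = ∑ e ∈ S, c {e}

/-- `c` is a nonnegative monotone cost function with `c ∅ = 0`. -/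
def MonotoneCost {E : Type*} (c : Finset E → ℝ) : Prop :=
  (∀ S : Finset E, 0 ≤ c S) ∧ c ∅ = 0 ∧ ∀ ⦃S T : Finset E⦄, S ⊆ T → c S ≤ c T

/-- `c` is subadditive. -/
def SubadditiveCost {E : Type*} [DecidableEq E] (c : Finset E → ℝ) : Prop :=
  ∀ S T : Finset E, c (S ∪ T) ≤ c S + c T

/-- `c` is submodular. -/
def SubmodularCost {E : Type*} [DecidableEq E] (c : Finset E → ℝ) : Prop :=
  ∀ S T : Finset E, c (S ∪ T) + c (S ∩ T) ≤ c S + c T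

/-- `A` is an allocation of all chores among the `n` agents. -/
def IsAllocation {E : Type*} [DecidableEq E] [Fintype E] {n : ℕ} (A : Fin n → Finset E) : Prop :=
  IsPartitionOf A Finset.univ

/-- `A` is `α`-envy-free. -/
def IsEF {E : Type*} {n : ℕ} (α : ℝ) (c : Fin n → Finset E → ℝ) (A : Fin n → Finset E) : Prop :=
  ∀ i j, c i (A i) ≤ α * c i (A j)

/-- `A` is `α`-envy-free up to one item. -/
def IsEF1 {E : Type*} [DecidableEq E] {n : ℕ} (α : ℝ) (c : Fin n → Finset E → ℝ)
    (A : Fin n → Finset E) : Prop :=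
  ∀ i j, i ≠ j → A i = ∅ ∨ ∃ e ∈ A i, c i (A i \ {e}) ≤ α * c i (A j)

/-- `A` is `α`-envy-free up to any (positive-cost) item. -/
def IsEFX {E : Type*} [DecidableEq E] {n : ℕ} (α : ℝ) (c : Fin n → Finset E → ℝ)
    (A : Fin n → Finset E) : Prop :=
  ∀ i j, i ≠ j → ∀ e ∈ A i, 0 < c i {e} → c i (A i \ {e}) ≤ α * c i (A j)

/-- `A` is an `α`-MMS allocation. -/
def IsMMSFair {E : Type*} [DecidableEq E] [Fintype E] {n : ℕ} (α : ℝ)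
    (c : Fin n → Finset E → ℝ) (A : Fin n → Finset E) : Prop :=
  ∀ i, c i (A i) ≤ α * MMS (c i) n Finset.univ

/-- `A` is an `α`-PMMS allocation. -/
def IsPMMS {E : Type*} [DecidableEq E] {n : ℕ} (α : ℝ)
    (c : Fin n → Finset E → ℝ) (A : Fin n → Finset E) : Prop :=
  ∀ i j, i ≠ j → c i (A i) ≤ α * MMS (c i) 2 (A i ∪ A j)

/-- The optimal (minimum) social cost over all allocations. -/
noncomputable def OPT {E : Type*} [DecidableEq E] [Fintype E] {n : ℕ}
    (c : Fin n → Finset E → ℝ) : ℝ :=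
  sInf { s : ℝ | ∃ A : Fin n → Finset E, IsAllocation A ∧ s = ∑ i, c i (A i) }

/-!
Let `X` be agent `i`'s bundle, `Y` and `Z` the other two, `T` a 3-partition attaining
`μ = MMS_i(3, E)`, and suppose `c X > μ`. PMMS against `Y` means that every `C ⊆ X ∪ Y`
with `c C < c X` satisfies `c C ≤ c Y` (otherwise `{C, (X ∪ Y) \ C}` would split `X ∪ Y`
into two bundles both cheaper than `X`). Applied to the cells `T l ∩ (X ∪ Y)`, which cost at
most `μ < c X`, this gives `c (T l ∩ X) + c (T l ∩ Y) ≤ c Y`; applied to `X \ T l` it gives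
`c X ≤ c Y + c (T l ∩ X)` whenever `c (T l ∩ X) > 0`; likewise for `Z`. If some cell has
`c (T l ∩ X) = 0`, summing the first inequalities over the two other cells gives
`c Y + c Z ≥ 2 c X - c (T l ∩ (Y ∪ Z)) ≥ 2 c X - μ`; otherwise summing the second over all
cells gives `c Y, c Z ≥ 2 c X / 3`. Since `c X + c Y + c Z ≤ 3 μ`, both cases give
`c X ≤ 4 μ / 3`.

For tightness, agent `0` has chore costs `2, 2, 2, 1, 1, 1` (so `MMS = 3`, by pairing a heavy
chore with a light one) and receives two heavy chores (cost `4`); the other agents have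
cost `0`.
-/

section Partition

variable {E : Type*} [DecidableEq E] {k : ℕ} {T : Fin k → Finset E} {S : Finset E}

lemma IsPartitionOf.subset (hT : IsPartitionOf T S) (l : Fin k) : T l ⊆ S :=
  hT.2 ▸ subset_biUnion_of_mem T (mem_univ l)

lemma IsPartitionOf.inter (hT : IsPartitionOf T S) (B : Finset E) :
    IsPartitionOf (fun l => T l ∩ B) (S ∩ B) := by
  refine ⟨fun i j hij => (hT.1 i j hij).mono inter_subset_left inter_subset_left, ?_⟩
  rw [← hT.2, biUnion_inter]

lemma isPartitionOf_pair {C : Finset E} (hC : C ⊆ S) : IsPartitionOf ![C, S \ C] S := by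
  refine ⟨fun i j hij => ?_, ?_⟩
  · fin_cases i <;> fin_cases j <;> simp_all [disjoint_sdiff, sdiff_disjoint]
  · ext a
    simp only [mem_biUnion, mem_univ, true_and, Fin.exists_fin_two, Matrix.cons_val_zero,
      Matrix.cons_val_one, ← mem_union, union_sdiff_of_subset hC]

lemma isPartitionOf_ite_zero [NeZero k] (S : Finset E) :
    IsPartitionOf (fun l : Fin k => if l = 0 then S else ∅) S := by
  refine ⟨fun i j hij => ?_, ?_⟩
  · dsimp only
    split_ifs <;> simp_all
  · ext a
    simp only [mem_biUnion, mem_univ, true_and]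
    refine ⟨fun ⟨l, hl⟩ => ?_, fun ha => ⟨0, by simpa using ha⟩⟩
    split_ifs at hl
    · exact hl
    · simp at hl

lemma finite_setOf_isPartitionOf (k : ℕ) (S : Finset E) :
    {T : Fin k → Finset E | IsPartitionOf T S}.Finite :=
  (Set.Finite.pi' fun _ => S.powerset.finite_toSet).subset fun _ hT l =>
    mem_coe.2 (mem_powerset.2 (hT.subset l))

end Partition

section MaximinShare

variable {E : Type*} [DecidableEq E] {c : Finset E → ℝ} {k : ℕ} {S : Finset E}

lemma finite_setOf_MMS_candidates (c : Finset E → ℝ) (k : ℕ) (S : Finset E) :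
    {m : ℝ | ∃ T : Fin k → Finset E, IsPartitionOf T S ∧ m = ⨆ j, c (T j)}.Finite := by
  convert (finite_setOf_isPartitionOf k S).image fun T => ⨆ j, c (T j) using 1
  ext m
  simp only [Set.mem_ofPred_eq, Set.mem_image, eq_comm]

lemma MMS_le_of_isPartitionOf [NeZero k] {T : Fin k → Finset E} (hT : IsPartitionOf T S) {b : ℝ}
    (hb : ∀ l, c (T l) ≤ b) : MMS c k S ≤ b :=
  (csInf_le (finite_setOf_MMS_candidates c k S).bddBelow ⟨T, hT, rfl⟩).trans (ciSup_le hb)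

lemma exists_isPartitionOf_MMS_eq_iSup (c : Finset E → ℝ) (k : ℕ) [NeZero k] (S : Finset E) :
    ∃ T : Fin k → Finset E, IsPartitionOf T S ∧ MMS c k S = ⨆ j, c (T j) := by
  refine Set.Nonempty.csInf_mem ?_ (finite_setOf_MMS_candidates c k S)
  exact ⟨_, _, isPartitionOf_ite_zero S, rfl⟩

lemma exists_isPartitionOf_le_MMS (c : Finset E → ℝ) (k : ℕ) [NeZero k] (S : Finset E) :
    ∃ T : Fin k → Finset E, IsPartitionOf T S ∧ ∀ l, c (T l) ≤ MMS c k S := by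
  obtain ⟨T, hT, hMMS⟩ := exists_isPartitionOf_MMS_eq_iSup c k S
  exact ⟨T, hT, fun l => hMMS ▸ le_ciSup (Set.finite_range fun j => c (T j)).bddAbove l⟩

lemma le_MMS [NeZero k] {b : ℝ}
    (h : ∀ T : Fin k → Finset E, IsPartitionOf T S → ∃ l, b ≤ c (T l)) :
    b ≤ MMS c k S := by
  obtain ⟨T, hT, hle⟩ := exists_isPartitionOf_le_MMS c k S
  obtain ⟨l, hl⟩ := h T hT
  exact hl.trans (hle l)

lemma MMS_nonneg [NeZero k] (hc : ∀ S, 0 ≤ c S) : 0 ≤ MMS c k S :=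
  le_MMS fun _ _ => ⟨0, hc _⟩

lemma MMS_two_le_max {C : Finset E} (h : C ⊆ S) :
    MMS c 2 S ≤ max (c C) (c (S \ C)) :=
  MMS_le_of_isPartitionOf (isPartitionOf_pair h) fun l => by
    fin_cases l
    exacts [le_max_left _ _, le_max_right _ _]

end MaximinShare

namespace AdditiveCost

variable {E : Type*} [DecidableEq E] {c : Finset E → ℝ} {S X B C : Finset E}

lemma mono (hc : AdditiveCost c) (h : X ⊆ S) : c X ≤ c S := by
  rw [hc.2 X, hc.2 S]
  exact sum_le_sum_of_subset_of_nonneg h fun e _ _ => hc.1 {e}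

lemma union_of_disjoint (hc : AdditiveCost c) (h : Disjoint X B) : c (X ∪ B) = c X + c B := by
  rw [hc.2 (X ∪ B), hc.2 X, hc.2 B, sum_union h]

lemma sdiff_of_subset (hc : AdditiveCost c) (h : C ⊆ S) : c (S \ C) = c S - c C := by
  have := hc.union_of_disjoint (disjoint_sdiff (s := C) (t := S))
  rw [union_sdiff_of_subset h] at this
  linarith

lemma sum_of_isPartitionOf (hc : AdditiveCost c) {k : ℕ} {T : Fin k → Finset E}
    (hT : IsPartitionOf T S) : ∑ l, c (T l) = c S := by
  rw [hc.2 S, ← hT.2, sum_biUnion fun i _ j _ hij => hT.1 i j hij]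
  exact sum_congr rfl fun l _ => hc.2 (T l)

lemma sum_inter_of_isPartitionOf (hc : AdditiveCost c) {k : ℕ} {T : Fin k → Finset E}
    (hT : IsPartitionOf T S) (hB : B ⊆ S) : ∑ l, c (T l ∩ B) = c B := by
  rw [hc.sum_of_isPartitionOf (hT.inter B), inter_eq_right.2 hB]

lemma le_mul_MMS (hc : AdditiveCost c) {k : ℕ} [NeZero k] : c S ≤ k * MMS c k S := by
  obtain ⟨T, hT, hle⟩ := exists_isPartitionOf_le_MMS c k S
  calc c S = ∑ l, c (T l) := (hc.sum_of_isPartitionOf hT).symm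
    _ ≤ ∑ _ : Fin k, MMS c k S := sum_le_sum fun l _ => hle l
    _ = k * MMS c k S := by simp

lemma le_MMS_two {b : ℝ} (hc : AdditiveCost c) (h : ∀ C ⊆ S, b ≤ c C ∨ c C + b ≤ c S) :
    b ≤ MMS c 2 S :=
  le_MMS fun T hT => by
    have hsum := hc.sum_of_isPartitionOf hT
    rw [Fin.sum_univ_two] at hsum
    rcases h (T 0) (hT.subset 0) with h0 | h0
    exacts [⟨0, h0⟩, ⟨1, by linarith⟩]

lemma le_of_lt_of_le_MMS_two (hc : AdditiveCost c) (hXB : Disjoint X B)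
    (hX : c X ≤ MMS c 2 (X ∪ B)) (hC : C ⊆ X ∪ B) (hCX : c C < c X) : c C ≤ c B := by
  have := hX.trans (MMS_two_le_max hC)
  rw [hc.sdiff_of_subset hC, hc.union_of_disjoint hXB] at this
  rcases le_max_iff.1 this with h | h <;> linarith

lemma inter_add_inter_le_of_le_MMS_two (hc : AdditiveCost c) (hXB : Disjoint X B)
    (hX : c X ≤ MMS c 2 (X ∪ B)) {D : Finset E} (hD : c D < c X) :
    c (D ∩ X) + c (D ∩ B) ≤ c B := by
  rw [← hc.union_of_disjoint (hXB.mono inter_subset_right inter_subset_right),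
    ← inter_union_distrib_left]
  exact hc.le_of_lt_of_le_MMS_two hXB hX inter_subset_right
    ((hc.mono inter_subset_left).trans_lt hD)

lemma le_add_of_le_MMS_two (hc : AdditiveCost c) (hXB : Disjoint X B)
    (hX : c X ≤ MMS c 2 (X ∪ B)) {D : Finset E} (hDX : D ⊆ X) (hD : 0 < c D) :
    c X ≤ c B + c D := by
  have := hc.le_of_lt_of_le_MMS_two hXB hX (sdiff_subset.trans subset_union_left)
    (by rw [hc.sdiff_of_subset hDX]; linarith)
  rw [hc.sdiff_of_subset hDX] at this
  linarith

theorem le_four_thirds_mul_MMS_three (hc : AdditiveCost c) {Y Z : Finset E}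
    (hXY : Disjoint X Y) (hXZ : Disjoint X Z) (hYZ : Disjoint Y Z) (hS : X ∪ Y ∪ Z ⊆ S)
    (hY : c X ≤ MMS c 2 (X ∪ Y)) (hZ : c X ≤ MMS c 2 (X ∪ Z)) :
    c X ≤ 4 / 3 * MMS c 3 S := by
  set μ := MMS c 3 S
  have htotal : c X + c Y + c Z ≤ 3 * μ := by
    calc c X + c Y + c Z = c (X ∪ Y ∪ Z) := by
          rw [hc.union_of_disjoint (disjoint_union_left.2 ⟨hXZ, hYZ⟩), hc.union_of_disjoint hXY]
      _ ≤ c S := hc.mono hS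
      _ ≤ 3 * μ := mod_cast hc.le_mul_MMS
  by_cases hXμ : c X ≤ μ
  · linarith [MMS_nonneg (k := 3) (S := S) hc.1]
  push Not at hXμ
  obtain ⟨T, hT, hTμ⟩ := exists_isPartitionOf_le_MMS c 3 S
  have hsum (B : Finset E) (hB : B ⊆ S) :
      c (T 0 ∩ B) + c (T 1 ∩ B) + c (T 2 ∩ B) = c B := by
    rw [← Fin.sum_univ_three (f := fun l => c (T l ∩ B)), hc.sum_inter_of_isPartitionOf hT hB]
  have hsumX := hsum X (subset_union_left.trans (subset_union_left.trans hS))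
  have hsumY := hsum Y (subset_union_right.trans (subset_union_left.trans hS))
  have hsumZ := hsum Z (subset_union_right.trans hS)
  have hcellY l := hc.inter_add_inter_le_of_le_MMS_two hXY hY ((hTμ l).trans_lt hXμ)
  have hcellZ l := hc.inter_add_inter_le_of_le_MMS_two hXZ hZ ((hTμ l).trans_lt hXμ)
  by_cases hzero : ∃ l, c (T l ∩ X) = 0
  · obtain ⟨l, hl⟩ := hzero
    have hYZl : c (T l ∩ Y) + c (T l ∩ Z) ≤ μ := by
      rw [← hc.union_of_disjoint (hYZ.mono inter_subset_right inter_subset_right),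
        ← inter_union_distrib_left]
      exact (hc.mono inter_subset_left).trans (hTμ l)
    obtain rfl | rfl | rfl : l = 0 ∨ l = 1 ∨ l = 2 := by fin_cases l <;> simp
    all_goals linarith [hcellY 0, hcellY 1, hcellY 2, hcellZ 0, hcellZ 1, hcellZ 2]
  · push Not at hzero
    have hpos l : 0 < c (T l ∩ X) := (hc.1 _).lt_of_ne' (hzero l)
    have hgapY l := hc.le_add_of_le_MMS_two hXY hY inter_subset_right (hpos l)
    have hgapZ l := hc.le_add_of_le_MMS_two hXZ hZ inter_subset_right (hpos l)
    linarith [hgapY 0, hgapY 1, hgapY 2, hgapZ 0, hgapZ 1, hgapZ 2]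

end AdditiveCost

theorem IsPMMS.isMMSFair_four_thirds {E : Type*} [DecidableEq E] [Fintype E]
    {c : Fin 3 → Finset E → ℝ} (hc : ∀ i, AdditiveCost (c i)) {A : Fin 3 → Finset E}
    (hA : IsAllocation A) (hP : IsPMMS 1 c A) : IsMMSFair (4 / 3) c A := by
  intro i
  obtain ⟨j, k, hij, hik, hjk⟩ : ∃ j k : Fin 3, i ≠ j ∧ i ≠ k ∧ j ≠ k := by
    revert i; decide
  exact (hc i).le_four_thirds_mul_MMS_three (hA.1 i j hij) (hA.1 i k hik) (hA.1 j k hjk)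
    (subset_univ _) (by simpa only [one_mul] using hP i j hij)
    (by simpa only [one_mul] using hP i k hik)

namespace TightExample

def weight : Fin 3 → Fin 6 → ℕ := ![![2, 2, 2, 1, 1, 1], 0, 0]

noncomputable def cost (i : Fin 3) (S : Finset (Fin 6)) : ℝ := ∑ e ∈ S, (weight i e : ℝ)

def alloc : Fin 3 → Finset (Fin 6) := ![{0, 1}, {2}, {3, 4, 5}]

lemma additiveCost_cost (i : Fin 3) : AdditiveCost (cost i) :=
  ⟨fun _ => sum_nonneg fun _ _ => Nat.cast_nonneg _, fun S => by simp [cost]⟩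

lemma cost_eq_cast (i : Fin 3) (S : Finset (Fin 6)) :
    cost i S = ((∑ e ∈ S, weight i e : ℕ) : ℝ) := by
  simp [cost]

lemma isAllocation_alloc : IsAllocation alloc := by
  unfold IsAllocation IsPartitionOf
  decide

lemma MMS_cost_zero_three : MMS (cost 0) 3 univ = 3 := by
  have hT : IsPartitionOf ![{0, 3}, {1, 4}, {2, 5}] (univ : Finset (Fin 6)) := by
    unfold IsPartitionOf
    decide
  have hupper : MMS (cost 0) 3 univ ≤ 3 := MMS_le_of_isPartitionOf hT fun l => by
    rw [cost_eq_cast]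
    exact_mod_cast (show ∑ e ∈ _, weight 0 e ≤ 3 by fin_cases l <;> decide)
  have hlower := (additiveCost_cost 0).le_mul_MMS (k := 3) (S := univ)
  rw [cost_eq_cast, show ∑ e, weight 0 e = 9 by decide] at hlower
  push_cast at hlower
  linarith

lemma four_le_MMS_cost_zero_two {S : Finset (Fin 6)}
    (hS : ∀ C ∈ S.powerset,
      4 ≤ ∑ e ∈ C, weight 0 e ∨ ∑ e ∈ C, weight 0 e + 4 ≤ ∑ e ∈ S, weight 0 e) :
    4 ≤ MMS (cost 0) 2 S :=
  (additiveCost_cost 0).le_MMS_two fun C hC => by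
    simp only [cost_eq_cast]
    exact_mod_cast hS C (mem_powerset.2 hC)

lemma cost_zero_alloc_zero : cost 0 (alloc 0) = 4 := by
  rw [cost_eq_cast]
  norm_num [alloc, weight]

lemma cost_zero_alloc_zero_eq_four_thirds_mul_MMS :
    cost 0 (alloc 0) = 4 / 3 * MMS (cost 0) 3 univ := by
  rw [cost_zero_alloc_zero, MMS_cost_zero_three]
  norm_num

lemma isPMMS_alloc : IsPMMS 1 cost alloc := by
  intro i j hij
  rw [one_mul]
  match i with
  | 0 =>
    rw [cost_zero_alloc_zero]
    apply four_le_MMS_cost_zero_two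
    match j with
    | 0 => exact absurd rfl hij
    | 1 => decide
    | 2 => decide
  | 1 | 2 =>
    refine le_of_eq_of_le ?_ (MMS_nonneg (additiveCost_cost _).1)
    simp [cost, weight]

end TightExample

/-- Proposition 5.4 (n = 3): with additive cost functions, every PMMS allocation among
three agents is `4/3`-MMS, and this bound is tight. -/
theorem PMMS_is_fourThirds_MMS_three_agents :
    (∀ (E : Type) [DecidableEq E] [Fintype E]
      (c : Fin 3 → Finset E → ℝ), (∀ i, AdditiveCost (c i)) →
      ∀ A : Fin 3 → Finset E, IsAllocation A → IsPMMS 1 c A →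
        IsMMSFair (4 / 3) c A) ∧
    (∃ (m : ℕ) (c : Fin 3 → Finset (Fin m) → ℝ) (A : Fin 3 → Finset (Fin m)),
      (∀ i, AdditiveCost (c i)) ∧ IsAllocation A ∧ IsPMMS 1 c A ∧
      ∃ i, c i (A i) = (4 / 3) * MMS (c i) 3 Finset.univ) :=
  ⟨fun _ _ _ _ hc _ hA hP => hP.isMMSFair_four_thirds hc hA,
    6, TightExample.cost, TightExample.alloc, TightExample.additiveCost_cost,
    TightExample.isAllocation_alloc, TightExample.isPMMS_alloc,
    0, TightExample.cost_zero_alloc_zero_eq_four_thirds_mul_MMS⟩
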